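/- arXiv:2605.04626 — 2 statements merged into one kernel-verified Lean document; each statement's English description precedes it below -/
import Mathlib

section
/- Let n ≥ 1 and let u, v, w, r be elements of a commutative ring with u and w invertible. Define the n×n matrices (indexed from 0 to n-1): A with entries A(i,j) = (-1)^{j-i} v^{j+1} C(i,j) + r u^{i+1} w^{j-i} s(i,j), B with entries B(i,j) = δ_{i,j} v^{i+1} + r u^{j+1} ∑_{l=0}^{i} C(i, i-l) s(l,j) (w/u)^{i-l}, C1 with entries (-1)^{i+j} C(i,j), C2 the diagonal matrix with entries (u/w)^i, and C3 the diagonal matrix with entries (w/u)^i, where s : ℕ × ℕ → R is an arbitrary function into the ring. Then A = C1 * C2 * B * C3. -/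
/-!
The signed Pascal matrix `((-1)^(i+k) C(i,k))` is the inverse of the Pascal matrix `(C(k,l))`
(binomial inversion). With `a = u / w`, the diagonal factor `diag(aᵏ)` turns the `s`-part of `B`
into the Pascal matrix applied to the column `(aˡ s(l,j))` (times `r u^(j+1)`), which the signed
Pascal matrix inverts back to `aⁱ s(i,j)`; on the diagonal part of `B` the two diagonal factors cancel.
-/

open Matrix Finset

section
variable {R : Type*} [CommRing R]

theorem sum_range_neg_one_pow_mul_choose (N : ℕ) :
    ∑ m ∈ range (N + 1), (-1 : R) ^ m * N.choose m = if N = 0 then 1 else 0 := by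
  have h := congrArg (Int.cast : ℤ → R) (Int.alternating_sum_range_choose (n := N))
  push_cast at h
  exact h

theorem sum_neg_one_pow_mul_choose_mul_choose (i j : ℕ) :
    ∑ k ∈ range (i + 1), (-1 : R) ^ (i + k) * i.choose k * k.choose j =
      if j = i then 1 else 0 := by
  rcases lt_or_ge i j with hij | hji
  · rw [if_neg hij.ne']
    refine sum_eq_zero fun k hk => ?_
    rw [Nat.choose_eq_zero_of_lt (n := k) (by grind), Nat.cast_zero, mul_zero]
  obtain ⟨d, rfl⟩ := Nat.exists_eq_add_of_le hji
  have hlow : ∑ k ∈ range j, (-1 : R) ^ (j + d + k) * (j + d).choose k * k.choose j = 0 :=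
    sum_eq_zero fun k hk => by
      rw [Nat.choose_eq_zero_of_lt (mem_range.mp hk), Nat.cast_zero, mul_zero]
  have hhigh (m : ℕ) : (-1 : R) ^ (j + d + (j + m)) * (j + d).choose (j + m) * (j + m).choose j =
      (-1 : R) ^ d * (j + d).choose j * ((-1) ^ m * d.choose m) := by
    have := Nat.choose_mul (n := j + d) (Nat.le_add_right j m)
    rw [Nat.add_sub_cancel_left, Nat.add_sub_cancel_left] at this
    rw [mul_assoc, ← Nat.cast_mul, this, Nat.cast_mul, show j + d + (j + m) = 2 * j + d + m by ring,
      pow_add, pow_add, pow_mul]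
    simp only [neg_one_sq, one_pow, one_mul]
    ring
  rw [show j + d + 1 = j + (d + 1) by ring, sum_range_add, hlow, zero_add]
  simp only [hhigh, ← mul_sum, sum_range_neg_one_pow_mul_choose]
  rcases d with _ | d <;> simp

theorem sum_neg_one_pow_mul_choose_mul_sum_choose (g : ℕ → R) (i : ℕ) :
    ∑ k ∈ range (i + 1), (-1 : R) ^ (i + k) * i.choose k *
      ∑ l ∈ range (k + 1), k.choose l * g l = g i := by
  calc _ = ∑ k ∈ range (i + 1), ∑ l ∈ range (i + 1),
        (-1 : R) ^ (i + k) * i.choose k * k.choose l * g l := by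
        refine sum_congr rfl fun k hk => ?_
        simp only [mul_sum, ← mul_assoc]
        refine sum_subset (range_subset_range.mpr (mem_range.mp hk)) fun l _ hl => ?_
        rw [Nat.choose_eq_zero_of_lt (n := k) (by simpa using hl)]
        simp
    _ = ∑ l ∈ range (i + 1), (if l = i then 1 else 0) * g l := by
        rw [sum_comm]
        simp only [← sum_mul, sum_neg_one_pow_mul_choose_mul_choose]
    _ = g i := by simp

theorem sum_fin_neg_one_pow_mul_choose_mul_sum_choose {n i : ℕ} (hi : i < n) (g : ℕ → R) :
    ∑ k : Fin n, (-1 : R) ^ (i + k) * i.choose k *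
      ∑ l ∈ range ((k : ℕ) + 1), (k : ℕ).choose l * g l =
      g i := by
  rw [Fin.sum_univ_eq_sum_range
    (fun k => (-1 : R) ^ (i + k) * i.choose k * ∑ l ∈ range (k + 1), k.choose l * g l),
    ← sum_subset (range_subset_range.mpr hi), sum_neg_one_pow_mul_choose_mul_sum_choose]
  intro k _ hk
  rw [Nat.choose_eq_zero_of_lt (by simpa using hk)]
  simp

theorem pow_mul_sum_choose_sub_mul_pow_sub {a b : R} (hab : a * b = 1) (f : ℕ → R) (k : ℕ) :
    a ^ k * ∑ l ∈ range (k + 1), k.choose (k - l) * f l * b ^ (k - l) =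
      ∑ l ∈ range (k + 1), k.choose l * (a ^ l * f l) := by
  rw [mul_sum]
  refine sum_congr rfl fun l hl => ?_
  obtain ⟨m, rfl⟩ := Nat.exists_eq_add_of_le (Nat.lt_succ_iff.mp (mem_range.mp hl))
  rw [Nat.add_sub_cancel_left, Nat.choose_symm_add]
  have hshift : a ^ (l + m) * b ^ m = a ^ l := by
    rw [pow_add, mul_assoc, ← mul_pow, hab, one_pow, mul_one]
  rw [← hshift]
  ring

end

theorem stmt_3_general (K : Type*) [Field K] (n : ℕ)
    (u v w r : K) (hu : u ≠ 0) (hw : w ≠ 0) (s : ℕ × ℕ → K) :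
    (Matrix.of fun i j : Fin n =>
        (-1 : K) ^ ((i : ℕ) + (j : ℕ)) * v ^ ((j : ℕ) + 1) * ((i : ℕ).choose (j : ℕ)) +
          r * u ^ ((i : ℕ) + 1) * (w ^ (j : ℕ) / w ^ (i : ℕ)) * s ((i : ℕ), (j : ℕ)))
      =
    (Matrix.of fun i j : Fin n =>
        (-1 : K) ^ ((i : ℕ) + (j : ℕ)) * ((i : ℕ).choose (j : ℕ))) *
    (Matrix.diagonal fun i : Fin n => (u / w) ^ (i : ℕ)) *
    (Matrix.of fun i j : Fin n =>
        (if i = j then v ^ ((i : ℕ) + 1) else 0) +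
          r * u ^ ((j : ℕ) + 1) *
            ∑ l ∈ Finset.range ((i : ℕ) + 1),
              ((i : ℕ).choose ((i : ℕ) - l)) * s (l, (j : ℕ)) * (w / u) ^ ((i : ℕ) - l)) *
    (Matrix.diagonal fun i : Fin n => (w / u) ^ (i : ℕ)) := by
  have huw : u / w * (w / u) = 1 := by field_simp
  ext i j
  rw [mul_diagonal, mul_apply]
  simp only [mul_diagonal, of_apply, mul_add, add_mul, sum_add_distrib]
  congr 1
  · rw [sum_eq_single j (fun k _ hk => by simp [hk]) (by simp), if_pos rfl,
      mul_right_comm _ (v ^ _) ((w / u) ^ _), mul_assoc _ ((u / w) ^ _) ((w / u) ^ _), ← mul_pow,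
      huw, one_pow, mul_one]
    ring
  · rw [show r * u ^ ((i : ℕ) + 1) * (w ^ (j : ℕ) / w ^ (i : ℕ)) * s (i, j) =
        r * u ^ ((j : ℕ) + 1) * ((u / w) ^ (i : ℕ) * s (i, j)) * (w / u) ^ (j : ℕ) by
          simp only [div_pow]; field_simp; ring,
      ← sum_fin_neg_one_pow_mul_choose_mul_sum_choose i.isLt fun l => (u / w) ^ l * s (l, j),
      mul_sum]
    congr 1
    refine sum_congr rfl fun k _ => ?_
    rw [← pow_mul_sum_choose_sub_mul_pow_sub huw fun l => s (l, j)]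
    ring

theorem stmt_3 (K : Type*) [Field K] (n : ℕ) (hn : 1 ≤ n)
    (u v w r : K) (hu : u ≠ 0) (hw : w ≠ 0) (s : ℕ × ℕ → K) :
    (Matrix.of fun i j : Fin n =>
        (-1 : K) ^ ((i : ℕ) + (j : ℕ)) * v ^ ((j : ℕ) + 1) * ((i : ℕ).choose (j : ℕ)) +
          r * u ^ ((i : ℕ) + 1) * (w ^ (j : ℕ) / w ^ (i : ℕ)) * s ((i : ℕ), (j : ℕ)))
      =
    (Matrix.of fun i j : Fin n =>
        (-1 : K) ^ ((i : ℕ) + (j : ℕ)) * ((i : ℕ).choose (j : ℕ))) *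
    (Matrix.diagonal fun i : Fin n => (u / w) ^ (i : ℕ)) *
    (Matrix.of fun i j : Fin n =>
        (if i = j then v ^ ((i : ℕ) + 1) else 0) +
          r * u ^ ((j : ℕ) + 1) *
            ∑ l ∈ Finset.range ((i : ℕ) + 1),
              ((i : ℕ).choose ((i : ℕ) - l)) * s (l, (j : ℕ)) * (w / u) ^ ((i : ℕ) - l)) *
    (Matrix.diagonal fun i : Fin n => (w / u) ^ (i : ℕ)) :=
  stmt_3_general K n u v w r hu hw s
end

section
/- For any permutation σ_I of {1,...,n} defined, for a subset I = {i_1 < ... < i_l} with complement {j_1 < ... < j_k}, as the one-line word i_l, ..., i_1, j_1, ..., j_k, the sign of σ_I equals ∏_{i ∈ I} (-1)^{i-1}. -/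
/-!
Induct on `I` by adding a new maximum `a`. Passing from `I \ {a}` to `I` moves the letter `a`
of the word from position `a` to the front, because exactly `a` letters (the rest of `I`,
reversed, and the complement of `I` below `a`) precede it in the word of `I \ {a}`. So the two
permutations differ by the cycle `Fin.cycleRange a`, of sign `(-1)^a`.
-/

/-- The one-line word of `σ_I`: the elements of `I` in decreasing order followed by
the elements of the complement of `I` in increasing order.  Here `{1,…,n}` is modelled
by `Fin n` (zero-indexed), so `(-1)^(i-1)` becomes `(-1)^(i : ℕ)`. -/
def sigmaWord {n : ℕ} (I : Finset (Fin n)) : List (Fin n) :=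
  (I.sort (· ≤ ·)).reverse ++ (Iᶜ.sort (· ≤ ·))

theorem Finset.sort_union_of_forall_lt {α : Type*} [LinearOrder α] {s t : Finset α}
    (h : ∀ x ∈ s, ∀ y ∈ t, x < y) :
    (s ∪ t).sort (· ≤ ·) = s.sort (· ≤ ·) ++ t.sort (· ≤ ·) := by
  have hnodup : (s.sort (· ≤ ·) ++ t.sort (· ≤ ·)).Nodup :=
    List.nodup_append.2 ⟨s.sort_nodup _, t.sort_nodup _, fun x hx y hy =>
      (h x (by simpa using hx) y (by simpa using hy)).ne⟩
  have hsorted := (List.toFinset_sort (· ≤ ·) hnodup).2 <|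
    List.pairwise_append.2 ⟨s.pairwise_sort _, t.pairwise_sort _, fun x hx y hy =>
      (h x (by simpa using hx) y (by simpa using hy)).le⟩
  rwa [List.toFinset_append, s.sort_toFinset, t.sort_toFinset] at hsorted

namespace Equiv.Perm

def HasOneLineWord {n : ℕ} (σ : Perm (Fin n)) (w : List (Fin n)) : Prop :=
  ∀ (p : Fin n) (hp : (p : ℕ) < w.length), σ p = w.get ⟨p, hp⟩

theorem HasOneLineWord.eq_one {n : ℕ} {σ : Perm (Fin n)}
    (hσ : σ.HasOneLineWord (List.finRange n)) : σ = 1 := by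
  ext p
  simpa using congrArg Fin.val (hσ p (by simp))

theorem HasOneLineWord.mul_cycleRange {n : ℕ} {σ : Perm (Fin n)} {U D : List (Fin n)}
    {c m : Fin n} (hσ : σ.HasOneLineWord (c :: (U ++ D))) (hm : U.length = m) :
    (σ * m.cycleRange).HasOneLineWord (U ++ c :: D) := by
  intro p hp
  simp only [List.length_append, List.length_cons] at hp
  rw [mul_apply]
  rcases lt_trichotomy p m with hlt | rfl | hgt
  · have hp' : (m.cycleRange p : ℕ) = p + 1 := Fin.coe_cycleRange_of_lt hlt
    have hpU : (p : ℕ) < U.length := hm ▸ hlt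
    rw [hσ _ (by simp; omega)]
    simp [hp', List.getElem_append_left hpU]
  · have hp' : (p.cycleRange p : ℕ) = 0 := by simp [Fin.coe_cycleRange_of_le le_rfl]
    rw [hσ _ (by simp; omega)]
    simp [hp', hm]
  · have hUp : U.length < p := hm ▸ hgt
    rw [Fin.cycleRange_of_gt hgt, hσ _ (by simp; omega)]
    have hsplit : U ++ c :: D = (U ++ [c]) ++ D := by simp
    simp only [List.get_eq_getElem, ← List.cons_append, hsplit]
    rw [List.getElem_append_right (by simp; omega), List.getElem_append_right (by simp; omega)]
    simp

end Equiv.Perm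

theorem sigmaWord_empty (n : ℕ) : sigmaWord (∅ : Finset (Fin n)) = List.finRange n := by
  simp [sigmaWord, Fin.sort_univ]

theorem sigmaWord_insert_of_forall_lt {n : ℕ} {s : Finset (Fin n)} {a : Fin n}
    (h : ∀ x ∈ s, x < a) :
    ∃ U D : List (Fin n), sigmaWord (insert a s) = a :: (U ++ D) ∧
      sigmaWord s = U ++ a :: D ∧ U.length = a := by
  set L := Finset.Iio a \ s
  have hs : s ⊆ Finset.Iio a := fun x hx => Finset.mem_Iio.2 (h x hx)
  have hcompl : sᶜ = L ∪ ({a} ∪ Finset.Ioi a) := by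
    ext x
    grind [Finset.mem_compl]
  have hcompl' : (insert a s)ᶜ = L ∪ Finset.Ioi a := by
    ext x
    grind [Finset.mem_compl]
  refine ⟨(s.sort (· ≤ ·)).reverse ++ L.sort (· ≤ ·), (Finset.Ioi a).sort (· ≤ ·), ?_, ?_, ?_⟩
  · rw [sigmaWord, hcompl', Finset.insert_eq, Finset.union_comm, Finset.sort_union_of_forall_lt,
      Finset.sort_union_of_forall_lt]
    · simp
    all_goals grind
  · rw [sigmaWord, hcompl, Finset.sort_union_of_forall_lt, Finset.sort_union_of_forall_lt]
    · simp
    all_goals grind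
  · rw [List.length_append, List.length_reverse, Finset.length_sort, Finset.length_sort,
      add_comm, Finset.card_sdiff_add_card_eq_card hs, Fin.card_Iio]

theorem stmt_8 (n : ℕ) (I : Finset (Fin n)) (σ : Equiv.Perm (Fin n))
    (hσ : ∀ (p : Fin n) (hp : (p : ℕ) < (sigmaWord I).length),
      σ p = (sigmaWord I).get ⟨(p : ℕ), hp⟩) :
    Equiv.Perm.sign σ = ∏ i ∈ I, (-1 : ℤˣ) ^ (i : ℕ) := by
  change σ.HasOneLineWord (sigmaWord I) at hσ
  induction I using Finset.induction_on_max generalizing σ with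
  | empty =>
    rw [sigmaWord_empty] at hσ
    simp [hσ.eq_one]
  | insert a s hs ih =>
    obtain ⟨U, D, hword_insert, hword, hU⟩ := sigmaWord_insert_of_forall_lt hs
    rw [hword_insert] at hσ
    have hsign := ih _ (hword ▸ hσ.mul_cycleRange hU)
    rw [map_mul, Fin.sign_cycleRange] at hsign
    rw [Finset.prod_insert fun ha => (hs a ha).false, ← hsign, mul_left_comm, ← mul_pow,
      Int.units_mul_self, one_pow, mul_one]
end
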